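/- arXiv:1912.02051 — 2 statements merged into one kernel-verified Lean document; each statement's English description precedes it below -/
import Mathlib

section
/- Let X, Y be finite sets, c : X × Y → ℝ≥0, and for probability mass functions let E(Q_X, Q_Y) denote the optimal transport cost. For product measures: for every n ≥ 1, E(P_X^n, P_Y^n) = E(P_X, P_Y), where the cost on X^n × Y^n is the additive cost c_n(x^n, y^n) = (1/n) Σ_{i=1}^n c(x_i, y_i). -/
/-!
For any coupling `π` of `P_X` and `P_Y`, the coupling `π^⊗n` of `n` independent copies couples
`P_X^n` and `P_Y^n`, and each of its coordinate marginals is `π`; since the additive cost is the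
average of the costs of the coordinate marginals, `π^⊗n` costs exactly as much as `π`.
Conversely, the coordinate marginals of any coupling of `P_X^n` and `P_Y^n` are couplings of
`P_X` and `P_Y`, so the same averaging bounds its cost below by `E(P_X, P_Y)`.
-/

open Finset

def IsPMF {X : Type*} [Fintype X] (p : X → ℝ) : Prop :=
  (∀ x, 0 ≤ p x) ∧ ∑ x, p x = 1

def IsCoupling {X Y : Type*} [Fintype X] [Fintype Y]
    (pX : X → ℝ) (pY : Y → ℝ) (π : X × Y → ℝ) : Prop :=
  IsPMF π ∧ (∀ x, ∑ y, π (x, y) = pX x) ∧ (∀ y, ∑ x, π (x, y) = pY y)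

noncomputable def OTCost {X Y : Type*} [Fintype X] [Fintype Y]
    (c : X × Y → ℝ) (pX : X → ℝ) (pY : Y → ℝ) : ℝ :=
  sInf {r | ∃ π, IsCoupling pX pY π ∧ r = ∑ z, π z * c z}

section PMF

variable {α β γ : Type*} [Fintype α] [Fintype β]

def pmfMap [DecidableEq β] (f : α → β) (p : α → ℝ) (b : β) : ℝ :=
  ∑ a, if f a = b then p a else 0

theorem sum_pmfMap_mul [DecidableEq β] (f : α → β) (p : α → ℝ) (h : β → ℝ) :
    ∑ b, pmfMap f p b * h b = ∑ a, p a * h (f a) := by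
  simp only [pmfMap, Finset.sum_mul, ite_mul, zero_mul]
  rw [Finset.sum_comm]
  simp

theorem pmfMap_pmfMap [Fintype γ] [DecidableEq β] [DecidableEq γ] (f : α → β) (g : β → γ)
    (p : α → ℝ) : pmfMap g (pmfMap f p) = pmfMap (g ∘ f) p := by
  ext c
  have h := sum_pmfMap_mul f p (fun b => if g b = c then 1 else 0)
  simp only [mul_ite, mul_one, mul_zero] at h
  exact h

theorem IsPMF.map [DecidableEq β] {p : α → ℝ} (hp : IsPMF p) (f : α → β) :
    IsPMF (pmfMap f p) :=
  ⟨fun b => Finset.sum_nonneg fun a _ => by split_ifs <;> simp [hp.1 a],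
    by simpa [hp.2] using sum_pmfMap_mul f p 1⟩

end PMF

section Coupling

variable {X Y X' Y' : Type*} [Fintype X] [Fintype Y] [Fintype X'] [Fintype Y']

theorem sum_apply_left_eq_pmfMap_fst [DecidableEq X] (π : X × Y → ℝ) (x : X) :
    ∑ y, π (x, y) = pmfMap Prod.fst π x := by
  rw [pmfMap, Fintype.sum_prod_type, Finset.sum_eq_single x (fun b _ hb => by simp [hb]) (by simp)]
  simp

theorem sum_apply_right_eq_pmfMap_snd [DecidableEq Y] (π : X × Y → ℝ) (y : Y) :
    ∑ x, π (x, y) = pmfMap Prod.snd π y := by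
  simp [pmfMap, Fintype.sum_prod_type]

theorem isCoupling_iff [DecidableEq X] [DecidableEq Y] {pX : X → ℝ} {pY : Y → ℝ}
    {π : X × Y → ℝ} :
    IsCoupling pX pY π ↔ IsPMF π ∧ pmfMap Prod.fst π = pX ∧ pmfMap Prod.snd π = pY := by
  simp only [IsCoupling, sum_apply_left_eq_pmfMap_fst, sum_apply_right_eq_pmfMap_snd, funext_iff]

theorem IsCoupling.map [DecidableEq X] [DecidableEq Y] [DecidableEq X'] [DecidableEq Y']
    {pX : X' → ℝ} {pY : Y' → ℝ} {π : X' × Y' → ℝ} (hπ : IsCoupling pX pY π)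
    (f : X' → X) (g : Y' → Y) :
    IsCoupling (pmfMap f pX) (pmfMap g pY) (pmfMap (Prod.map f g) π) := by
  rw [isCoupling_iff] at hπ ⊢
  obtain ⟨hπ, rfl, rfl⟩ := hπ
  exact ⟨hπ.map _, by simp only [pmfMap_pmfMap]; rfl, by simp only [pmfMap_pmfMap]; rfl⟩

theorem isCoupling_mul {pX : X → ℝ} {pY : Y → ℝ} (hpX : IsPMF pX) (hpY : IsPMF pY) :
    IsCoupling pX pY (fun z => pX z.1 * pY z.2) := by
  refine ⟨⟨fun z => mul_nonneg (hpX.1 _) (hpY.1 _), ?_⟩, fun x => ?_, fun y => ?_⟩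
  · simp [Fintype.sum_prod_type, ← Finset.mul_sum, hpY.2, hpX.2]
  · simp [← Finset.mul_sum, hpY.2]
  · simp [← Finset.sum_mul, hpX.2]

end Coupling

section Pi

variable {ι Z : Type*} [Fintype ι] [DecidableEq ι] [Fintype Z]

def pmfPi (q : Z → ℝ) (g : ι → Z) : ℝ := ∏ i, q (g i)

theorem IsPMF.pi {q : Z → ℝ} (hq : IsPMF q) : IsPMF (pmfPi q : (ι → Z) → ℝ) :=
  ⟨fun g => Finset.prod_nonneg fun i _ => hq.1 _,
    (Fintype.prod_sum fun (_ : ι) => q).symm.trans (by simp [hq.2])⟩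

theorem sum_pmfPi_mul_eval {q : Z → ℝ} (hq : ∑ z, q z = 1) (i : ι) (h : Z → ℝ) :
    ∑ g : ι → Z, pmfPi q g * h (g i) = ∑ z, q z * h z := by
  -- absorb `h (g i)` into the `i`-th factor, so that the sum over `g` factorizes
  have hsplit : ∀ g : ι → Z,
      pmfPi q g * h (g i) = ∏ j, q (g j) * if j = i then h (g j) else 1 := by
    intro g
    rw [Finset.prod_mul_distrib, Finset.prod_ite_eq']
    simp [pmfPi]
  calc ∑ g : ι → Z, pmfPi q g * h (g i)
      = ∑ g : ι → Z, ∏ j, (fun j z => q z * if j = i then h z else 1) j (g j) :=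
        Finset.sum_congr rfl fun g _ => hsplit g
    _ = ∏ j, ∑ z, q z * if j = i then h z else 1 :=
        (Fintype.prod_sum fun j z => q z * if j = i then h z else 1).symm
    _ = ∑ z, q z * h z := by
        rw [Finset.prod_eq_single i (fun j _ hj => by simp [hj, hq]) (by simp)]
        simp

theorem pmfMap_eval_pmfPi [DecidableEq Z] {q : Z → ℝ} (hq : ∑ z, q z = 1) (i : ι) :
    pmfMap (Function.eval i) (pmfPi q) = q := by
  ext z
  simpa [pmfMap] using sum_pmfPi_mul_eval hq i (fun z' => if z' = z then 1 else 0)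

end Pi

section Tensorization

variable {ι X Y : Type*} [Fintype ι] [DecidableEq ι] [Fintype X] [Fintype Y]

def couplingPi (π : X × Y → ℝ) : (ι → X) × (ι → Y) → ℝ :=
  pmfPi π ∘ (Equiv.arrowProdEquivProdArrow ι _ _).symm

theorem IsCoupling.pi {pX : X → ℝ} {pY : Y → ℝ} {π : X × Y → ℝ}
    (hπ : IsCoupling pX pY π) :
    IsCoupling (pmfPi pX) (pmfPi pY) (couplingPi π : (ι → X) × (ι → Y) → ℝ) := by
  refine ⟨⟨fun p => Finset.prod_nonneg fun i _ => hπ.1.1 _, ?_⟩, fun xs => ?_, fun ys => ?_⟩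
  · exact (Fintype.sum_equiv (Equiv.arrowProdEquivProdArrow ι _ _).symm _ _ fun _ => rfl).trans
      hπ.1.pi.2
  · exact (Fintype.prod_sum fun i y => π (xs i, y)).symm.trans
      (Finset.prod_congr rfl fun i _ => hπ.2.1 (xs i))
  · exact (Fintype.prod_sum fun i x => π (x, ys i)).symm.trans
      (Finset.prod_congr rfl fun i _ => hπ.2.2 (ys i))

variable [DecidableEq X] [DecidableEq Y]

theorem pmfMap_eval_couplingPi {π : X × Y → ℝ} (hπ : ∑ z, π z = 1) (i : ι) :
    pmfMap (Prod.map (Function.eval i) (Function.eval i)) (couplingPi π) = π := by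
  ext z
  exact (Fintype.sum_equiv (Equiv.arrowProdEquivProdArrow ι _ _).symm _ _ fun _ => rfl).trans
    (congrFun (pmfMap_eval_pmfPi hπ i) z)

theorem IsCoupling.map_eval {pX : X → ℝ} {pY : Y → ℝ} {P : (ι → X) × (ι → Y) → ℝ}
    (hP : IsCoupling (pmfPi pX) (pmfPi pY) P) (hpX : ∑ x, pX x = 1) (hpY : ∑ y, pY y = 1)
    (i : ι) : IsCoupling pX pY (pmfMap (Prod.map (Function.eval i) (Function.eval i)) P) := by
  simpa only [pmfMap_eval_pmfPi hpX, pmfMap_eval_pmfPi hpY] using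
    hP.map (Function.eval i) (Function.eval i)

theorem sum_mul_additiveCost (P : (ι → X) × (ι → Y) → ℝ) (c : X × Y → ℝ) (w : ℝ) :
    ∑ p, P p * (w * ∑ i, c (p.1 i, p.2 i))
      = w * ∑ i, ∑ z, pmfMap (Prod.map (Function.eval i) (Function.eval i)) P z * c z := by
  simp_rw [sum_pmfMap_mul, Finset.mul_sum]
  rw [Finset.sum_comm]
  exact Finset.sum_congr rfl fun i _ => Finset.sum_congr rfl fun p _ =>
    mul_left_comm _ _ _

end Tensorization

section OTCost

variable {X Y : Type*} [Fintype X] [Fintype Y] {pX : X → ℝ} {pY : Y → ℝ}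

theorem OTCost_le (c : X × Y → ℝ) {π : X × Y → ℝ} (hπ : IsCoupling pX pY π) :
    OTCost c pX pY ≤ ∑ z, π z * c z := by
  refine csInf_le ⟨-∑ z, |c z|, ?_⟩ ⟨π, hπ, rfl⟩
  rintro r ⟨π', hπ', rfl⟩
  rw [← Finset.sum_neg_distrib]
  refine Finset.sum_le_sum fun z _ => ?_
  have h0 := hπ'.1.1 z
  have h1 : π' z ≤ 1 := hπ'.1.2 ▸ Finset.single_le_sum (fun z _ => hπ'.1.1 z) (mem_univ z)
  nlinarith [neg_abs_le (c z), abs_nonneg (c z)]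

theorem le_OTCost (c : X × Y → ℝ) {a : ℝ} (hpX : IsPMF pX) (hpY : IsPMF pY)
    (h : ∀ π, IsCoupling pX pY π → a ≤ ∑ z, π z * c z) : a ≤ OTCost c pX pY :=
  le_csInf ⟨_, _, isCoupling_mul hpX hpY, rfl⟩ fun _ ⟨π, hπ, hr⟩ => hr ▸ h π hπ

end OTCost

theorem stmt9_general {X Y : Type*} [Fintype X] [Fintype Y]
    (c : X × Y → ℝ)
    (pX : X → ℝ) (pY : Y → ℝ) (hpX : IsPMF pX) (hpY : IsPMF pY)
    (n : ℕ) (hn : 1 ≤ n) :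
    OTCost (fun p : (Fin n → X) × (Fin n → Y) => (1 / n : ℝ) * ∑ i, c (p.1 i, p.2 i))
      (fun xs => ∏ i, pX (xs i)) (fun ys => ∏ i, pY (ys i))
      = OTCost c pX pY := by
  classical
  have hn0 : (n : ℝ) ≠ 0 := Nat.cast_ne_zero.2 (by omega)
  have avg (a : ℝ) : (1 / n : ℝ) * ∑ _i : Fin n, a = a := by
    rw [Finset.sum_const, Finset.card_univ, Fintype.card_fin, nsmul_eq_mul]
    field_simp
  apply le_antisymm
  · refine le_OTCost c hpX hpY fun π hπ => ?_
    calc OTCost _ (pmfPi pX) (pmfPi pY) ≤ _ := OTCost_le _ hπ.pi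
      _ = ∑ z, π z * c z := by
        rw [sum_mul_additiveCost]
        simp only [pmfMap_eval_couplingPi hπ.1.2]
        exact avg _
  · refine le_OTCost _ (hpX.pi (ι := Fin n)) (hpY.pi (ι := Fin n))
      fun P (hP : IsCoupling (pmfPi pX) (pmfPi pY) P) => ?_
    rw [sum_mul_additiveCost]
    calc OTCost c pX pY = (1 / n : ℝ) * ∑ _i : Fin n, OTCost c pX pY := (avg _).symm
      _ ≤ _ := by
        gcongr with i
        exact OTCost_le c (hP.map_eval hpX.2 hpY.2 i)

/-- tensorization of the OT cost: for the additive cost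
`c_n(x^n,y^n) = (1/n) Σᵢ c(xᵢ,yᵢ)` and the `n`-fold product marginals,
`E(P_X^n, P_Y^n) = E(P_X, P_Y)`. -/
theorem stmt9 {X Y : Type*} [Fintype X] [Fintype Y]
    (c : X × Y → ℝ) (hc : ∀ z, 0 ≤ c z)
    (pX : X → ℝ) (pY : Y → ℝ) (hpX : IsPMF pX) (hpY : IsPMF pY)
    (n : ℕ) (hn : 1 ≤ n) :
    OTCost (fun p : (Fin n → X) × (Fin n → Y) => (1 / n : ℝ) * ∑ i, c (p.1 i, p.2 i))
      (fun xs => ∏ i, pX (xs i)) (fun ys => ∏ i, pY (ys i))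
      = OTCost c pX pY :=
  stmt9_general c pX pY hpX hpY n hn
end

section
/- Under the setup of θ (finite alphabets, finite cost, α = E(P_X,P_Y)): for any positive sequence a_n → 0 and any signed measures β_X, β_Y summing to zero, limsup_{n→∞} (E(P_X + a_n β_X, P_Y + a_n β_Y) − α)/a_n ≤ θ(β_X, β_Y), provided P_X + a_n β_X and P_Y + a_n β_Y are probability mass functions for large n. -/
open Finset Filter

section Aux
variable {X Y : Type*} [Fintype X] [Fintype Y]

lemma isCoupling_prod {pX : X → ℝ} {pY : Y → ℝ} (hX : IsPMF pX) (hY : IsPMF pY) :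
    IsCoupling pX pY (fun z => pX z.1 * pY z.2) := by
  refine ⟨⟨fun z => mul_nonneg (hX.1 _) (hY.1 _), ?_⟩, fun x => ?_, fun y => ?_⟩
  · rw [Fintype.sum_prod_type]
    simp only [← Finset.mul_sum, hY.2, mul_one, hX.2]
  · simp only [← Finset.mul_sum, hY.2, mul_one]
  · simp only [← Finset.sum_mul, hX.2, one_mul]

lemma costSet_bddBelow (c : X × Y → ℝ) (hc : ∀ z, 0 ≤ c z) (pX : X → ℝ) (pY : Y → ℝ) :
    BddBelow {r | ∃ π, IsCoupling pX pY π ∧ r = ∑ z, π z * c z} := by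
  refine ⟨0, fun r hr => ?_⟩
  obtain ⟨π, hπ, rfl⟩ := hr
  exact Finset.sum_nonneg fun z _ => mul_nonneg (hπ.1.1 z) (hc z)

lemma OTCost_le_cost {c : X × Y → ℝ} (hc : ∀ z, 0 ≤ c z) {pX : X → ℝ} {pY : Y → ℝ}
    {π : X × Y → ℝ} (hπ : IsCoupling pX pY π) :
    OTCost c pX pY ≤ ∑ z, π z * c z :=
  csInf_le (costSet_bddBelow c hc pX pY) ⟨π, hπ, rfl⟩

lemma exists_optimalCoupling (c : X × Y → ℝ) (hc : ∀ z, 0 ≤ c z) {pX : X → ℝ} {pY : Y → ℝ}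
    (hX : IsPMF pX) (hY : IsPMF pY) :
    ∃ π, IsCoupling pX pY π ∧ ∑ z, π z * c z = OTCost c pX pY := by
  have hKne : (({π | IsCoupling pX pY π} : Set (X × Y → ℝ))).Nonempty :=
    ⟨_, isCoupling_prod hX hY⟩
  have hsub : {π : X × Y → ℝ | IsCoupling pX pY π} ⊆ Set.Icc 0 1 := by
    intro π hπ
    constructor
    · intro z; exact hπ.1.1 z
    · intro z
      calc π z ≤ ∑ w, π w := Finset.single_le_sum (fun w _ => hπ.1.1 w) (Finset.mem_univ z)
      _ = 1 := hπ.1.2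
  have hclosed : IsClosed ({π : X × Y → ℝ | IsCoupling pX pY π}) := by
    have h1 : IsClosed {π : X × Y → ℝ | ∀ z, 0 ≤ π z} := by
      rw [Set.setOf_forall]
      exact isClosed_iInter fun z => isClosed_le continuous_const (continuous_apply z)
    have h2 : IsClosed {π : X × Y → ℝ | ∑ z, π z = 1} :=
      isClosed_eq (by continuity) continuous_const
    have h3 : IsClosed {π : X × Y → ℝ | ∀ x, ∑ y, π (x, y) = pX x} := by
      rw [Set.setOf_forall]
      exact isClosed_iInter fun x => isClosed_eq (by continuity) continuous_const
    have h4 : IsClosed {π : X × Y → ℝ | ∀ y, ∑ x, π (x, y) = pY y} := by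
      rw [Set.setOf_forall]
      exact isClosed_iInter fun y => isClosed_eq (by continuity) continuous_const
    have : {π : X × Y → ℝ | IsCoupling pX pY π} =
        (({π | ∀ z, 0 ≤ π z} ∩ {π | ∑ z, π z = 1}) ∩ {π | ∀ x, ∑ y, π (x, y) = pX x}) ∩
          {π | ∀ y, ∑ x, π (x, y) = pY y} := by
      ext π
      simp only [Set.mem_setOf_eq, Set.mem_inter_iff, IsCoupling, IsPMF]
      tauto
    rw [this]
    exact ((h1.inter h2).inter h3).inter h4
  have hcompact : IsCompact ({π : X × Y → ℝ | IsCoupling pX pY π}) :=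
    (isCompact_Icc).of_isClosed_subset hclosed hsub
  have hcont : Continuous fun π : X × Y → ℝ => ∑ z, π z * c z := by continuity
  obtain ⟨π₀, hπ₀, hmin⟩ := hcompact.exists_isMinOn hKne hcont.continuousOn
  refine ⟨π₀, hπ₀, le_antisymm ?_ (OTCost_le_cost hc hπ₀)⟩
  refine le_csInf ⟨_, π₀, hπ₀, rfl⟩ ?_
  rintro r ⟨π, hπ, rfl⟩
  exact hmin hπ

lemma OTCost_le_glue (c : X × Y → ℝ) (hc : ∀ z, 0 ≤ c z)
    {p p' : X → ℝ} {q q' : Y → ℝ} (hp : IsPMF p) (hq : IsPMF q)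
    (hp' : IsPMF p') (hq' : IsPMF q')
    {π : X × Y → ℝ} (hπ : IsCoupling p' q' π) :
    OTCost c p q ≤ ∑ z, π z * c z +
      (∑ x, |p x - p' x| + ∑ y, |q y - q' y|) * ∑ z, c z := by
  classical
  set u : X → ℝ := fun x => if p' x = 0 then 0 else min (p x) (p' x) / p' x with hu_def
  set v : Y → ℝ := fun y => if q' y = 0 then 0 else min (q y) (q' y) / q' y with hv_def
  have hπ0 : ∀ z, 0 ≤ π z := hπ.1.1
  have hu0 : ∀ x, 0 ≤ u x := by
    intro x; by_cases h : p' x = 0 <;> simp only [hu_def, h, if_true, if_false, le_refl]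
    · exact div_nonneg (le_min (hp.1 x) (hp'.1 x)) (hp'.1 x)
  have hu1 : ∀ x, u x ≤ 1 := by
    intro x; by_cases h : p' x = 0 <;> simp only [hu_def, h, if_true, if_false]
    · exact zero_le_one
    · exact div_le_one_of_le₀ (min_le_right _ _) (hp'.1 x)
  have hup : ∀ x, u x * p' x = min (p x) (p' x) := by
    intro x; by_cases h : p' x = 0
    · simp [hu_def, h, min_eq_right (hp.1 x)]
    · simp only [hu_def, h, if_false]; exact div_mul_cancel₀ _ h
  have hv0 : ∀ y, 0 ≤ v y := by
    intro y; by_cases h : q' y = 0 <;> simp only [hv_def, h, if_true, if_false, le_refl]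
    · exact div_nonneg (le_min (hq.1 y) (hq'.1 y)) (hq'.1 y)
  have hv1 : ∀ y, v y ≤ 1 := by
    intro y; by_cases h : q' y = 0 <;> simp only [hv_def, h, if_true, if_false]
    · exact zero_le_one
    · exact div_le_one_of_le₀ (min_le_right _ _) (hq'.1 y)
  have hvq : ∀ y, v y * q' y = min (q y) (q' y) := by
    intro y; by_cases h : q' y = 0
    · simp [hv_def, h, min_eq_right (hq.1 y)]
    · simp only [hv_def, h, if_false]; exact div_mul_cancel₀ _ h
  set σ : X × Y → ℝ := fun z => π z * (u z.1 * v z.2) with hσ_def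
  have hσ0 : ∀ z, 0 ≤ σ z := fun z =>
    mul_nonneg (hπ0 z) (mul_nonneg (hu0 _) (hv0 _))
  have hσle : ∀ z, σ z ≤ π z := by
    intro z
    have : u z.1 * v z.2 ≤ 1 := mul_le_one₀ (hu1 _) (hv0 _) (hv1 _)
    calc σ z ≤ π z * 1 := mul_le_mul_of_nonneg_left this (hπ0 z)
    _ = π z := mul_one _
  have hmargX : ∀ x, ∑ y, σ (x, y) ≤ p x := by
    intro x
    have h1 : ∑ y, σ (x, y) ≤ ∑ y, π (x, y) * u x := by
      apply Finset.sum_le_sum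
      intro y _
      have : u x * v y ≤ u x * 1 := mul_le_mul_of_nonneg_left (hv1 y) (hu0 x)
      calc σ (x, y) = π (x, y) * (u x * v y) := rfl
      _ ≤ π (x, y) * (u x * 1) := mul_le_mul_of_nonneg_left this (hπ0 _)
      _ = π (x, y) * u x := by ring
    have h2 : ∑ y, π (x, y) * u x = u x * p' x := by
      rw [← Finset.sum_mul, hπ.2.1 x, mul_comm]
    calc ∑ y, σ (x, y) ≤ u x * p' x := by rw [← h2]; exact h1
    _ = min (p x) (p' x) := hup x
    _ ≤ p x := min_le_left _ _
  have hmargY : ∀ y, ∑ x, σ (x, y) ≤ q y := by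
    intro y
    have h1 : ∑ x, σ (x, y) ≤ ∑ x, π (x, y) * v y := by
      apply Finset.sum_le_sum
      intro x _
      have : u x * v y ≤ 1 * v y := mul_le_mul_of_nonneg_right (hu1 x) (hv0 y)
      calc σ (x, y) = π (x, y) * (u x * v y) := rfl
      _ ≤ π (x, y) * (1 * v y) := mul_le_mul_of_nonneg_left this (hπ0 _)
      _ = π (x, y) * v y := by ring
    have h2 : ∑ x, π (x, y) * v y = v y * q' y := by
      rw [← Finset.sum_mul, hπ.2.2 y, mul_comm]
    calc ∑ x, σ (x, y) ≤ v y * q' y := by rw [← h2]; exact h1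
    _ = min (q y) (q' y) := hvq y
    _ ≤ q y := min_le_left _ _
  set dX : X → ℝ := fun x => p x - ∑ y, σ (x, y) with hdX_def
  set dY : Y → ℝ := fun y => q y - ∑ x, σ (x, y) with hdY_def
  set δ : ℝ := 1 - ∑ z, σ z with hδ_def
  have hdX0 : ∀ x, 0 ≤ dX x := fun x => sub_nonneg.2 (hmargX x)
  have hdY0 : ∀ y, 0 ≤ dY y := fun y => sub_nonneg.2 (hmargY y)
  have hsumdX : ∑ x, dX x = δ := by
    simp only [hdX_def, Finset.sum_sub_distrib, hp.2, hδ_def, ← Fintype.sum_prod_type]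
  have hsumdY : ∑ y, dY y = δ := by
    simp only [hdY_def, Finset.sum_sub_distrib, hq.2, hδ_def, ← Fintype.sum_prod_type_right]
  have hδ0 : 0 ≤ δ := hsumdX ▸ Finset.sum_nonneg fun x _ => hdX0 x
  have hkeyX : ∀ x, dX x * δ / δ = dX x := by
    intro x
    by_cases hδ : δ = 0
    · have : dX x = 0 := by
        have := (Finset.sum_eq_zero_iff_of_nonneg (fun x _ => hdX0 x)).1
          (hsumdX.trans hδ) x (Finset.mem_univ x)
        exact this
      simp [this]
    · exact mul_div_cancel_right₀ _ hδ
  set σ' : X × Y → ℝ := fun z => σ z + dX z.1 * dY z.2 / δ with hσ'_def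
  have hσ'c : IsCoupling p q σ' := by
    refine ⟨⟨fun z => add_nonneg (hσ0 z) (div_nonneg (mul_nonneg (hdX0 _) (hdY0 _)) hδ0), ?_⟩,
      fun x => ?_, fun y => ?_⟩
    · rw [Fintype.sum_prod_type]
      have : ∀ x, ∑ y, σ' (x, y) = (∑ y, σ (x, y)) + dX x := by
        intro x
        simp only [hσ'_def]
        rw [Finset.sum_add_distrib]
        congr 1
        rw [← Finset.sum_div, ← Finset.mul_sum, hsumdY, hkeyX]
      rw [Finset.sum_congr rfl fun x _ => this x, Finset.sum_add_distrib, hsumdX,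
        ← Fintype.sum_prod_type, hδ_def]
      ring
    · simp only [hσ'_def]
      rw [Finset.sum_add_distrib, ← Finset.sum_div, ← Finset.mul_sum, hsumdY, hkeyX]
      simp [hdX_def]
    · simp only [hσ'_def]
      have : ∑ x, dX x * dY y / δ = dY y := by
        rw [← Finset.sum_div, ← Finset.sum_mul, hsumdX]
        by_cases hδ : δ = 0
        · have : dY y = 0 := (Finset.sum_eq_zero_iff_of_nonneg (fun y _ => hdY0 y)).1
            (hsumdY.trans hδ) y (Finset.mem_univ y)
          simp [this, hδ]
        · rw [mul_comm]; exact mul_div_cancel_right₀ _ hδ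
      rw [Finset.sum_add_distrib, this]
      simp [hdY_def]
  have hcost : ∑ z, σ' z * c z ≤ ∑ z, π z * c z + δ * ∑ z, c z := by
    have h1 : ∑ z, σ' z * c z = ∑ z, σ z * c z + ∑ z, (dX z.1 * dY z.2 / δ) * c z := by
      simp only [hσ'_def, add_mul, Finset.sum_add_distrib]
    have h2 : ∑ z, σ z * c z ≤ ∑ z, π z * c z :=
      Finset.sum_le_sum fun z _ => mul_le_mul_of_nonneg_right (hσle z) (hc z)
    have h3 : ∑ z, (dX z.1 * dY z.2 / δ) * c z ≤ ∑ z, δ * c z := by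
      apply Finset.sum_le_sum
      intro z _
      apply mul_le_mul_of_nonneg_right _ (hc z)
      by_cases hδ : δ = 0
      · have : dX z.1 = 0 := (Finset.sum_eq_zero_iff_of_nonneg (fun x _ => hdX0 x)).1
          (hsumdX.trans hδ) z.1 (Finset.mem_univ z.1)
        simp [this, hδ]
      · have hδpos : 0 < δ := lt_of_le_of_ne hδ0 (Ne.symm hδ)
        rw [div_le_iff₀ hδpos]
        have hX : dX z.1 ≤ δ := by
          rw [← hsumdX]
          exact Finset.single_le_sum (fun x _ => hdX0 x) (Finset.mem_univ z.1)
        have hY : dY z.2 ≤ δ := by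
          rw [← hsumdY]
          exact Finset.single_le_sum (fun y _ => hdY0 y) (Finset.mem_univ z.2)
        exact mul_le_mul hX hY (hdY0 _) hδ0
    rw [h1, ← Finset.mul_sum] at *
    linarith [Finset.mul_sum (Finset.univ : Finset (X × Y)) c δ]
  have hδle : δ ≤ ∑ x, |p x - p' x| + ∑ y, |q y - q' y| := by
    have hlb : ∀ z : X × Y, π z * (u z.1 + v z.2 - 1) ≤ σ z := by
      intro z
      apply mul_le_mul_of_nonneg_left _ (hπ0 z)
      nlinarith [mul_nonneg (sub_nonneg.2 (hu1 z.1)) (sub_nonneg.2 (hv1 z.2))]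
    have hsum1 : ∑ z : X × Y, π z * u z.1 = ∑ x, min (p x) (p' x) := by
      rw [Fintype.sum_prod_type]
      apply Finset.sum_congr rfl
      intro x _
      dsimp only
      rw [← Finset.sum_mul, hπ.2.1 x, mul_comm, hup x]
    have hsum2 : ∑ z : X × Y, π z * v z.2 = ∑ y, min (q y) (q' y) := by
      rw [Fintype.sum_prod_type_right]
      apply Finset.sum_congr rfl
      intro y _
      dsimp only
      rw [← Finset.sum_mul, hπ.2.2 y, mul_comm, hvq y]
    have hmass : ∑ x, min (p x) (p' x) + ∑ y, min (q y) (q' y) - 1 ≤ ∑ z, σ z := by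
      have := Finset.sum_le_sum (fun z (_ : z ∈ Finset.univ) => hlb z)
      have hexp : ∑ z : X × Y, π z * (u z.1 + v z.2 - 1) =
          ∑ z : X × Y, π z * u z.1 + ∑ z : X × Y, π z * v z.2 - ∑ z, π z := by
        rw [← Finset.sum_add_distrib, ← Finset.sum_sub_distrib]
        apply Finset.sum_congr rfl
        intro z _; ring
      rw [hexp, hsum1, hsum2, hπ.1.2] at this
      exact this
    have hminp : 1 - ∑ x, |p x - p' x| ≤ ∑ x, min (p x) (p' x) := by
      have : ∀ x, p' x - |p x - p' x| ≤ min (p x) (p' x) := by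
        intro x
        rcases le_total (p x) (p' x) with h | h
        · rw [min_eq_left h, abs_of_nonpos (by linarith)]; linarith
        · rw [min_eq_right h]; have := abs_nonneg (p x - p' x); linarith
      calc 1 - ∑ x, |p x - p' x| = ∑ x, (p' x - |p x - p' x|) := by
            rw [Finset.sum_sub_distrib, hp'.2]
      _ ≤ ∑ x, min (p x) (p' x) := Finset.sum_le_sum fun x _ => this x
    have hminq : 1 - ∑ y, |q y - q' y| ≤ ∑ y, min (q y) (q' y) := by
      have : ∀ y, q' y - |q y - q' y| ≤ min (q y) (q' y) := by
        intro y
        rcases le_total (q y) (q' y) with h | h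
        · rw [min_eq_left h, abs_of_nonpos (by linarith)]; linarith
        · rw [min_eq_right h]; have := abs_nonneg (q y - q' y); linarith
      calc 1 - ∑ y, |q y - q' y| = ∑ y, (q' y - |q y - q' y|) := by
            rw [Finset.sum_sub_distrib, hq'.2]
      _ ≤ ∑ y, min (q y) (q' y) := Finset.sum_le_sum fun y _ => this y
    simp only [hδ_def]
    linarith
  have hcsum : 0 ≤ ∑ z, c z := Finset.sum_nonneg fun z _ => hc z
  calc OTCost c p q ≤ ∑ z, σ' z * c z := OTCost_le_cost hc hσ'c
  _ ≤ ∑ z, π z * c z + δ * ∑ z, c z := hcost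
  _ ≤ ∑ z, π z * c z + (∑ x, |p x - p' x| + ∑ y, |q y - q' y|) * ∑ z, c z := by
      have := mul_le_mul_of_nonneg_right hδle hcsum
      linarith

end Aux

/-- with `α = E(P_X,P_Y)` and `θ` defined via signed couplings with
negative part supported on `S` (the union of supports of optimal couplings), for any
positive sequence `a_n → 0` and signed measures `β_X, β_Y` summing to zero such that
`P_X + a_n β_X` and `P_Y + a_n β_Y` are pmfs for large `n`,
`limsup_n (E(P_X + a_n β_X, P_Y + a_n β_Y) − α)/a_n ≤ θ(β_X, β_Y)`. -/
theorem stmt12 {X Y : Type*} [Fintype X] [Fintype Y]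
    (c : X × Y → ℝ) (hc : ∀ z, 0 ≤ c z)
    (pX : X → ℝ) (pY : Y → ℝ) (hpX : IsPMF pX) (hpY : IsPMF pY)
    (S : Set (X × Y))
    (hS : S = {z | ∃ π, IsCoupling pX pY π ∧ (∑ w, π w * c w) = OTCost c pX pY ∧ π z ≠ 0})
    (θ : (X → ℝ) → (Y → ℝ) → ℝ)
    (hθ : ∀ βX βY, θ βX βY = sInf {r | ∃ β : X × Y → ℝ,
        (∀ x, ∑ y, β (x, y) = βX x) ∧ (∀ y, ∑ x, β (x, y) = βY y) ∧
        (∀ z, β z < 0 → z ∈ S) ∧ r = ∑ z, β z * c z})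
    (a : ℕ → ℝ) (hapos : ∀ n, 0 < a n) (ha0 : Tendsto a atTop (nhds 0))
    (βX : X → ℝ) (βY : Y → ℝ) (hβX : ∑ x, βX x = 0) (hβY : ∑ y, βY y = 0)
    (hev : ∀ᶠ n in atTop, IsPMF (fun x => pX x + a n * βX x) ∧
        IsPMF (fun y => pY y + a n * βY y)) :
    limsup (fun n => (OTCost c (fun x => pX x + a n * βX x)
        (fun y => pY y + a n * βY y) - OTCost c pX pY) / a n) atTop
      ≤ θ βX βY := by
  classical
  set α := OTCost c pX pY with hα_def
  -- nonemptyness of the alphabets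
  have hXne : Nonempty X := by
    by_contra h
    rw [not_nonempty_iff] at h
    have := hpX.2
    rw [Finset.univ_eq_empty, Finset.sum_empty] at this
    norm_num at this
  have hYne : Nonempty Y := by
    by_contra h
    rw [not_nonempty_iff] at h
    have := hpY.2
    rw [Finset.univ_eq_empty, Finset.sum_empty] at this
    norm_num at this
  -- an optimal coupling positive on S
  obtain ⟨πopt, hπopt, hπoptcost⟩ := exists_optimalCoupling c hc hpX hpY
  have hchoice : ∀ z : X × Y, ∃ π, IsCoupling pX pY π ∧ (∑ w, π w * c w) = α ∧
      (z ∈ S → π z ≠ 0) := by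
    intro z
    by_cases hz : z ∈ S
    · rw [hS] at hz
      obtain ⟨π, h1, h2, h3⟩ := hz
      exact ⟨π, h1, h2, fun _ => h3⟩
    · exact ⟨πopt, hπopt, hπoptcost, fun h => absurd h hz⟩
  choose g hg1 hg2 hg3 using hchoice
  set K : ℝ := (Fintype.card (X × Y) : ℝ) with hK_def
  have hK : 0 < K := by
    rw [hK_def]
    exact_mod_cast (Fintype.card_pos : 0 < Fintype.card (X × Y))
  set πb : X × Y → ℝ := fun w => (∑ z, g z w) / K with hπb_def
  have hπb0 : ∀ w, 0 ≤ πb w := fun w =>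
    div_nonneg (Finset.sum_nonneg fun z _ => (hg1 z).1.1 w) hK.le
  have hπbmargX : ∀ x, ∑ y, πb (x, y) = pX x := by
    intro x
    calc ∑ y, πb (x, y) = (∑ y, ∑ z, g z (x, y)) / K := by rw [Finset.sum_div]
    _ = (∑ z, ∑ y, g z (x, y)) / K := by rw [Finset.sum_comm]
    _ = (∑ _z : X × Y, pX x) / K := by rw [Finset.sum_congr rfl fun z _ => (hg1 z).2.1 x]
    _ = pX x := by
        rw [Finset.sum_const, Finset.card_univ, nsmul_eq_mul]
        exact mul_div_cancel_left₀ _ hK.ne'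
  have hπbmargY : ∀ y, ∑ x, πb (x, y) = pY y := by
    intro y
    calc ∑ x, πb (x, y) = (∑ x, ∑ z, g z (x, y)) / K := by rw [Finset.sum_div]
    _ = (∑ z, ∑ x, g z (x, y)) / K := by rw [Finset.sum_comm]
    _ = (∑ _z : X × Y, pY y) / K := by rw [Finset.sum_congr rfl fun z _ => (hg1 z).2.2 y]
    _ = pY y := by
        rw [Finset.sum_const, Finset.card_univ, nsmul_eq_mul]
        exact mul_div_cancel_left₀ _ hK.ne'
  have hπbc : IsCoupling pX pY πb := by
    refine ⟨⟨hπb0, ?_⟩, hπbmargX, hπbmargY⟩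
    rw [Fintype.sum_prod_type]
    rw [Finset.sum_congr rfl fun x _ => hπbmargX x]
    exact hpX.2
  have hπbcost : ∑ w, πb w * c w = α := by
    calc ∑ w, πb w * c w = ∑ w, (∑ z, g z w * c w) / K := by
          apply Finset.sum_congr rfl
          intro w _
          rw [div_mul_eq_mul_div, Finset.sum_mul]
    _ = (∑ w, ∑ z, g z w * c w) / K := by rw [Finset.sum_div]
    _ = (∑ z, ∑ w, g z w * c w) / K := by rw [Finset.sum_comm]
    _ = (∑ _z : X × Y, α) / K := by rw [Finset.sum_congr rfl fun z _ => hg2 z]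
    _ = α := by
        rw [Finset.sum_const, Finset.card_univ, nsmul_eq_mul]
        exact mul_div_cancel_left₀ _ hK.ne'
  have hπbposS : ∀ z ∈ S, 0 < πb z := by
    intro z hz
    apply div_pos _ hK
    have h1 : 0 < g z z := lt_of_le_of_ne ((hg1 z).1.1 z) (Ne.symm (hg3 z hz))
    have h2 : g z z ≤ ∑ w, g w z :=
      Finset.single_le_sum (fun w _ => (hg1 w).1.1 z) (Finset.mem_univ z)
    linarith
  have hπbsupp : ∀ z, z ∉ S → πb z = 0 := by
    intro z hz
    have h0 : ∀ w, g w z = 0 := by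
      intro w
      by_contra hne
      exact hz (hS ▸ ⟨g w, hg1 w, hg2 w, hne⟩)
    simp only [hπb_def]
    rw [Finset.sum_eq_zero fun w _ => h0 w, zero_div]
  -- the θ set is nonempty
  set Tset := {r | ∃ β : X × Y → ℝ,
      (∀ x, ∑ y, β (x, y) = βX x) ∧ (∀ y, ∑ x, β (x, y) = βY y) ∧
      (∀ z, β z < 0 → z ∈ S) ∧ r = ∑ z, β z * c z} with hT_def
  obtain ⟨N₀, hN₀⟩ := hev.exists
  have hTne : Tset.Nonempty := by
    set β₀ : X × Y → ℝ := fun z =>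
      ((pX z.1 + a N₀ * βX z.1) * (pY z.2 + a N₀ * βY z.2) - πb z) / a N₀ with hβ₀_def
    refine ⟨∑ z, β₀ z * c z, β₀, fun x => ?_, fun y => ?_, fun z hz => ?_, rfl⟩
    · have : ∑ y, β₀ (x, y) =
          ((pX x + a N₀ * βX x) * (∑ y, (pY y + a N₀ * βY y)) - ∑ y, πb (x, y)) / a N₀ := by
        rw [Finset.mul_sum, ← Finset.sum_sub_distrib, ← Finset.sum_div]
      rw [this, hN₀.2.2, hπbmargX x, mul_one, add_sub_cancel_left, mul_comm,
        mul_div_assoc, div_self (hapos N₀).ne', mul_one]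
    · have : ∑ x, β₀ (x, y) =
          ((∑ x, (pX x + a N₀ * βX x)) * (pY y + a N₀ * βY y) - ∑ x, πb (x, y)) / a N₀ := by
        rw [Finset.sum_mul, ← Finset.sum_sub_distrib, ← Finset.sum_div]
      rw [this, hN₀.1.2, hπbmargY y, one_mul, add_sub_cancel_left, mul_comm,
        mul_div_assoc, div_self (hapos N₀).ne', mul_one]
    · by_contra hzS
      have hprod : 0 ≤ (pX z.1 + a N₀ * βX z.1) * (pY z.2 + a N₀ * βY z.2) :=
        mul_nonneg (hN₀.1.1 z.1) (hN₀.2.1 z.2)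
      have hπbz : πb z = 0 := hπbsupp z hzS
      have : 0 ≤ β₀ z := by
        simp only [hβ₀_def, hπbz, sub_zero]
        exact div_nonneg hprod (hapos N₀).le
      linarith
  rw [hθ]
  refine le_csInf hTne ?_
  rintro r ⟨β, hb1, hb2, hb3, rfl⟩
  -- coboundedness: eventual lower bound
  set b : ℝ := -(1 + (∑ x, |βX x| + ∑ y, |βY y|) * ∑ z, c z) with hb_def
  have hlower : ∀ᶠ n in atTop, b ≤ (OTCost c (fun x => pX x + a n * βX x)
      (fun y => pY y + a n * βY y) - α) / a n := by
    filter_upwards [hev] with n hn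
    set pn : X → ℝ := fun x => pX x + a n * βX x
    set qn : Y → ℝ := fun y => pY y + a n * βY y
    have hEne : {r | ∃ π, IsCoupling pn qn π ∧ r = ∑ z, π z * c z}.Nonempty :=
      ⟨_, _, isCoupling_prod hn.1 hn.2, rfl⟩
    have hlt : OTCost c pn qn < OTCost c pn qn + a n := lt_add_of_pos_right _ (hapos n)
    obtain ⟨r, hrmem, hrlt⟩ := exists_lt_of_csInf_lt hEne hlt
    obtain ⟨π, hπ, rfl⟩ := hrmem
    have hglue := OTCost_le_glue c hc hpX hpY hn.1 hn.2 hπ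
    have h1 : ∑ x, |pX x - pn x| = a n * ∑ x, |βX x| := by
      rw [Finset.mul_sum]
      apply Finset.sum_congr rfl
      intro x _
      rw [show pX x - pn x = -(a n * βX x) by simp [pn], abs_neg, abs_mul,
        abs_of_pos (hapos n)]
    have h2 : ∑ y, |pY y - qn y| = a n * ∑ y, |βY y| := by
      rw [Finset.mul_sum]
      apply Finset.sum_congr rfl
      intro y _
      rw [show pY y - qn y = -(a n * βY y) by simp [qn], abs_neg, abs_mul,
        abs_of_pos (hapos n)]
    rw [h1, h2] at hglue
    rw [le_div_iff₀ (hapos n)]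
    have hexp : (a n * ∑ x, |βX x| + a n * ∑ y, |βY y|) * ∑ z, c z =
        a n * ((∑ x, |βX x| + ∑ y, |βY y|) * ∑ z, c z) := by ring
    rw [hexp] at hglue
    simp only [hb_def]
    nlinarith [hapos n]
  have hcobdd : IsCoboundedUnder (· ≤ ·) atTop (fun n => (OTCost c (fun x => pX x + a n * βX x)
      (fun y => pY y + a n * βY y) - α) / a n) :=
    isCoboundedUnder_le_of_eventually_le atTop hlower
  apply limsup_le_of_le hcobdd
  -- eventual positivity of πb + a n • β
  have hposev : ∀ᶠ n in atTop, ∀ z, 0 ≤ πb z + a n * β z := by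
    rw [Filter.eventually_all]
    intro z
    by_cases hz : β z < 0
    · have hπbz : 0 < πb z := hπbposS z (hb3 z hz)
      have hq : 0 < πb z / (-β z) := div_pos hπbz (neg_pos.2 hz)
      have : ∀ᶠ n in atTop, a n < πb z / (-β z) := ha0.eventually_lt_const hq
      filter_upwards [this] with n hn
      have : a n * (-β z) < πb z := by
        rw [← lt_div_iff₀ (neg_pos.2 hz)]
        exact hn
      linarith
    · push_neg at hz
      filter_upwards with n
      exact add_nonneg (hπb0 z) (mul_nonneg (hapos n).le hz)
  have hsumβ : ∑ z, β z = 0 := by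
    rw [Fintype.sum_prod_type]
    rw [Finset.sum_congr rfl fun x _ => hb1 x]
    exact hβX
  filter_upwards [hev, hposev] with n hn hpos
  set pn : X → ℝ := fun x => pX x + a n * βX x
  set qn : Y → ℝ := fun y => pY y + a n * βY y
  set ρ : X × Y → ℝ := fun z => πb z + a n * β z with hρ_def
  have hρc : IsCoupling pn qn ρ := by
    refine ⟨⟨hpos, ?_⟩, fun x => ?_, fun y => ?_⟩
    · rw [Finset.sum_add_distrib, hπbc.1.2, ← Finset.mul_sum, hsumβ]
      ring
    · rw [Finset.sum_add_distrib, hπbmargX x, ← Finset.mul_sum, hb1 x]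
    · rw [Finset.sum_add_distrib, hπbmargY y, ← Finset.mul_sum, hb2 y]
  have hcost : ∑ z, ρ z * c z = α + a n * ∑ z, β z * c z := by
    simp only [hρ_def, add_mul, Finset.sum_add_distrib, hπbcost]
    rw [Finset.mul_sum]
    congr 1
    apply Finset.sum_congr rfl
    intro z _
    ring
  have hle : OTCost c pn qn ≤ α + a n * ∑ z, β z * c z := by
    rw [← hcost]
    exact OTCost_le_cost hc hρc
  rw [div_le_iff₀ (hapos n)]
  linarith
end
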